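/- Let ℓ ≥ 1 and let u = (u_1,…,u_ℓ) be the unique real-analytic solution of the small-cluster system on [0, t_ex) with nonnegative normalized initial data. Then u_n(t) ≥ 0 for every 1 ≤ n ≤ ℓ and every t ∈ [0, t_ex). -/

import Mathlib

/-!
By continuous induction in time it suffices that nonnegativity of all `u_n` at a time `x`
persists on some interval `(x, x + δ)`. If it does not, analyticity lets us pick, among the
coordinates taking negative values right after `x`, one coordinate `u_m` vanishing at `x` to the
lowest order: it is negative on `(x, x + δ)` and every other such coordinate is `O(u_m)`.
The equation for `u_m` is quasi-positive: the products in its gain term that involve only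
nonnegative coordinates are nonnegative, and every remaining term contains `u_m` or another
negative coordinate, hence is `O(u_m)`. So `u_m' ≥ C u_m`, and since `u_m(x) ≥ 0`, Grönwall's
argument (monotonicity of `exp (-C t) u_m`) gives `u_m ≥ 0` on `(x, x + δ)`, a contradiction.
-/

open Finset Filter Topology

noncomputable section

/-- Total reaction probability mass for the small-cluster system:
`M(t) = ∑_{i=1}^{ℓ} ∑_{j=ℓ−i+1}^{ℓ} i j u_i(t) u_j(t)`. -/
def Msmall (ℓ : ℕ) (u : ℕ → ℝ → ℝ) (t : ℝ) : ℝ :=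
  ∑ i ∈ Finset.Icc 1 ℓ, ∑ j ∈ Finset.Icc (ℓ - i + 1) ℓ,
    (i : ℝ) * (j : ℝ) * u i t * u j t

/-- Right-hand side of the small-cluster equation for `u n` (`1 ≤ n ≤ ℓ`):
`(1/M) ∑_{i=n}^{ℓ} i(n+ℓ−i) u_i u_{n+ℓ−i} − (2 n u_n/M) ∑_{i=ℓ−n+1}^{ℓ} i u_i`. -/
def smallRHS (ℓ : ℕ) (u : ℕ → ℝ → ℝ) (n : ℕ) (t : ℝ) : ℝ :=
  (1 / Msmall ℓ u t) *
      (∑ i ∈ Finset.Icc n ℓ,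
        (i : ℝ) * ((n + ℓ - i : ℕ) : ℝ) * u i t * u (n + ℓ - i) t)
    - (2 * (n : ℝ) * u n t / Msmall ℓ u t) *
        ∑ i ∈ Finset.Icc (ℓ - n + 1) ℓ, (i : ℝ) * u i t

end

open Asymptotics

theorem eventually_nonneg_of_hasDerivAt_ge_mul {f f' : ℝ → ℝ} {x C : ℝ} (hx : 0 ≤ f x)
    (hcont : ContinuousWithinAt f (Set.Ioi x) x)
    (hderiv : ∀ᶠ t in 𝓝[>] x, HasDerivAt f (f' t) t ∧ C * f t ≤ f' t) :
    ∀ᶠ t in 𝓝[>] x, 0 ≤ f t := by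
  obtain ⟨c, hxc, hsub⟩ := mem_nhdsGT_iff_exists_Ioo_subset.1 hderiv
  have hd : ∀ t ∈ Set.Ioo x c, HasDerivAt (fun t => Real.exp (-C * t) * f t)
      (Real.exp (-C * t) * (f' t - C * f t)) t := fun t ht => by
    have hexp : HasDerivAt (fun t => Real.exp (-C * t)) (Real.exp (-C * t) * -C) t := by
      simpa using ((hasDerivAt_id t).const_mul (-C)).exp
    exact (hexp.fun_mul (hsub ht).1).congr_deriv (by ring)
  have hmono : MonotoneOn (fun t => Real.exp (-C * t) * f t) (Set.Ico x c) := by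
    refine monotoneOn_of_hasDerivWithinAt_nonneg (convex_Ico x c)
      (f' := fun t => Real.exp (-C * t) * (f' t - C * f t)) ?_ ?_ ?_
    · rintro t ⟨hxt, htc⟩
      rcases hxt.eq_or_lt with rfl | hxt
      · exact (Continuous.continuousWithinAt (by fun_prop)).mul
          ((continuousWithinAt_Ioi_iff_Ici.1 hcont).mono Set.Ico_subset_Ici_self)
      · exact (hd t ⟨hxt, htc⟩).continuousAt.continuousWithinAt
    · rw [interior_Ico]
      exact fun t ht => (hd t ht).hasDerivWithinAt
    · rw [interior_Ico]
      exact fun t ht => mul_nonneg (Real.exp_pos _).le (sub_nonneg.2 (hsub ht).2)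
  filter_upwards [Ioo_mem_nhdsGT hxc] with t ht
  have := hmono ⟨le_rfl, hxc⟩ ⟨ht.1.le, ht.2⟩ ht.1.le
  exact nonneg_of_mul_nonneg_right ((mul_nonneg (Real.exp_pos _).le hx).trans this)
    (Real.exp_pos _)

theorem Asymptotics.IsBigO.exists_mul_le_of_nonpos {α : Type*} {l : Filter α} {f g : α → ℝ}
    (h : f =O[l] g) (hg : ∀ᶠ t in l, g t ≤ 0) : ∃ C, ∀ᶠ t in l, C * g t ≤ f t := by
  obtain ⟨C, hC⟩ := h.bound
  refine ⟨C, ?_⟩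
  filter_upwards [hC, hg] with t hfg hgt
  rw [Real.norm_eq_abs, Real.norm_eq_abs, abs_of_nonpos hgt] at hfg
  linarith [neg_abs_le (f t)]

theorem isBigO_sub_pow_mul_of_le {g₁ g₂ : ℝ → ℝ} {x : ℝ} {k₁ k₂ : ℕ} (hk : k₂ ≤ k₁)
    (hg₁ : ContinuousAt g₁ x) (hg₂ : ContinuousAt g₂ x) (hne : g₂ x ≠ 0) :
    (fun t => (t - x) ^ k₁ * g₁ t) =O[𝓝 x] fun t => (t - x) ^ k₂ * g₂ t := by
  have hrest : (fun t => (t - x) ^ (k₁ - k₂) * g₁ t) =O[𝓝 x] g₂ := by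
    have hbdd : ContinuousAt (fun t => (t - x) ^ (k₁ - k₂) * g₁ t) x := by fun_prop
    refine (hbdd.tendsto.isBigO_one ℝ).trans ((isBigO_const_left_iff_pos_le_norm one_ne_zero).2 ?_)
    refine ⟨‖g₂ x‖ / 2, by positivity, ?_⟩
    exact hg₂.norm.eventually (eventually_ge_nhds (by linarith [norm_pos_iff.2 hne]))
  refine ((isBigO_refl (fun t => (t - x) ^ k₂) _).mul hrest).congr_left fun t => ?_
  rw [← mul_assoc, ← pow_add, Nat.add_sub_cancel' hk]

theorem AnalyticWithinAt.eventually_nonneg_or_eventuallyEq_pow_mul_neg {f : ℝ → ℝ} {s : Set ℝ}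
    {x : ℝ} (hf : AnalyticWithinAt ℝ f s x) (hs : s ∈ 𝓝[>] x) :
    (∀ᶠ t in 𝓝[>] x, 0 ≤ f t) ∨ ∃ (k : ℕ) (g : ℝ → ℝ), ContinuousAt g x ∧ g x < 0 ∧
      f =ᶠ[𝓝[>] x] fun t => (t - x) ^ k * g t := by
  obtain ⟨F, hfF, hF⟩ := analyticWithinAt_iff_exists_analyticAt.1 hf
  have hfF' : f =ᶠ[𝓝[>] x] F :=
    hfF.filter_mono ((nhdsWithin_le_of_mem hs).trans (nhdsWithin_mono _ (Set.subset_insert _ _)))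
  by_cases hzero : ∀ᶠ t in 𝓝 x, F t = 0
  · left
    filter_upwards [hfF', nhdsWithin_le_nhds hzero] with t h1 h2
    rw [h1, h2]
  obtain ⟨k, g, hg, hgx, hFg⟩ := hF.exists_eventuallyEq_pow_smul_nonzero_iff.2 hzero
  have hfg : f =ᶠ[𝓝[>] x] fun t => (t - x) ^ k * g t :=
    hfF'.trans (nhdsWithin_le_nhds hFg)
  rcases hgx.lt_or_gt with hneg | hpos
  · exact Or.inr ⟨k, g, hg.continuousAt, hneg, hfg⟩
  · left
    filter_upwards [hfg, self_mem_nhdsWithin,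
      nhdsWithin_le_nhds (hg.continuousAt.eventually (eventually_gt_nhds hpos))] with t h1 h2 h3
    rw [h1]
    exact mul_nonneg (pow_nonneg (sub_nonneg.2 (le_of_lt h2)) _) h3.le

theorem exists_dominant_eventually_neg {ι : Type*} {I : Finset ι} {f : ι → ℝ → ℝ} {x : ℝ}
    (hf : ∀ j ∈ I, (∀ᶠ t in 𝓝[>] x, 0 ≤ f j t) ∨ ∃ (k : ℕ) (g : ℝ → ℝ), ContinuousAt g x ∧
      g x < 0 ∧ f j =ᶠ[𝓝[>] x] fun t => (t - x) ^ k * g t)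
    (hneg : ¬ ∀ᶠ t in 𝓝[>] x, ∀ j ∈ I, 0 ≤ f j t) :
    ∃ m ∈ I, (∀ᶠ t in 𝓝[>] x, f m t < 0) ∧
      ∀ j ∈ I, (∀ᶠ t in 𝓝[>] x, 0 ≤ f j t) ∨ f j =O[𝓝[>] x] f m := by
  classical
  set bad := I.filter fun j => ¬ ∀ᶠ t in 𝓝[>] x, 0 ≤ f j t
  have hbad : bad.Nonempty := by
    rw [eventually_all_finset] at hneg
    obtain ⟨j, hj, hjneg⟩ := not_forall₂.1 hneg
    exact ⟨j, mem_filter.2 ⟨hj, hjneg⟩⟩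
  have hrep : ∀ j ∈ bad, ∃ (k : ℕ) (g : ℝ → ℝ), ContinuousAt g x ∧ g x < 0 ∧
      f j =ᶠ[𝓝[>] x] fun t => (t - x) ^ k * g t :=
    fun j hj => (hf j (mem_filter.1 hj).1).resolve_left (mem_filter.1 hj).2
  choose! k g hg hgneg hfg using hrep
  -- the bad function vanishing to the lowest order dominates the others
  obtain ⟨m, hm, hmin⟩ := bad.exists_min_image k hbad
  refine ⟨m, (mem_filter.1 hm).1, ?_, fun j hj => ?_⟩
  · filter_upwards [hfg m hm, self_mem_nhdsWithin,
      nhdsWithin_le_nhds ((hg m hm).eventually (eventually_lt_nhds (hgneg m hm)))] with t h1 h2 h3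
    rw [h1]
    exact mul_neg_of_pos_of_neg (pow_pos (sub_pos.2 h2) _) h3
  · by_cases hj' : ∀ᶠ t in 𝓝[>] x, 0 ≤ f j t
    · exact Or.inl hj'
    have hjbad : j ∈ bad := mem_filter.2 ⟨hj, hj'⟩
    have hO := (isBigO_sub_pow_mul_of_le (hmin j hjbad) (hg j hjbad) (hg m hm)
      (hgneg m hm).ne).mono (nhdsWithin_le_nhds (s := Set.Ioi x))
    exact Or.inr (((hfg j hjbad).trans_isBigO hO).trans_eventuallyEq (hfg m hm).symm)

theorem isClosed_setOf_forall_nonneg_inter {ι : Type*} {I : Finset ι} {f : ι → ℝ → ℝ}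
    {K : Set ℝ} (hK : IsClosed K) (hf : ∀ j ∈ I, ContinuousOn (f j) K) :
    IsClosed ({t | ∀ j ∈ I, 0 ≤ f j t} ∩ K) := by
  have hset : {t | ∀ j ∈ I, 0 ≤ f j t} ∩ K = K ∩ ⋂ j ∈ I, K ∩ f j ⁻¹' Set.Ici 0 := by
    ext t
    simp only [Set.mem_inter_iff, Set.mem_iInter, Set.mem_preimage, Set.mem_Ici]
    exact ⟨fun ⟨h, htK⟩ => ⟨htK, fun j hj => ⟨htK, h j hj⟩⟩,
      fun ⟨htK, h⟩ => ⟨fun j hj => (h j hj).2, htK⟩⟩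
  rw [hset]
  exact hK.inter (isClosed_biInter fun j hj => (hf j hj).preimage_isClosed_of_isClosed hK
    isClosed_Ici)

theorem tendsto_Msmall {ℓ : ℕ} {u : ℕ → ℝ → ℝ} {l : Filter ℝ} {x : ℝ}
    (hu : ∀ j ∈ Icc 1 ℓ, Tendsto (u j) l (𝓝 (u j x))) :
    Tendsto (Msmall ℓ u) l (𝓝 (Msmall ℓ u x)) := by
  unfold Msmall
  refine tendsto_finsetSum _ fun i hi => tendsto_finsetSum _ fun j hj => ?_
  have hj' : j ∈ Icc 1 ℓ := by simp only [mem_Icc] at hi hj ⊢; omega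
  exact (tendsto_const_nhds.mul (hu i hi)).mul (hu j hj')

theorem exists_isBigO_le_smallRHS {ℓ m : ℕ} {u : ℕ → ℝ → ℝ} {l : Filter ℝ} (hm : m ∈ Icc 1 ℓ)
    (hu : ∀ j ∈ Icc 1 ℓ, u j =O[l] fun _ => (1 : ℝ))
    (hM : (fun t => (Msmall ℓ u t)⁻¹) =O[l] fun _ => (1 : ℝ))
    (hM_nonneg : ∀ᶠ t in l, 0 ≤ Msmall ℓ u t)
    (hsign : ∀ j ∈ Icc 1 ℓ, (∀ᶠ t in l, 0 ≤ u j t) ∨ u j =O[l] u m) :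
    ∃ E : ℝ → ℝ, E =O[l] u m ∧ ∀ᶠ t in l, E t ≤ smallRHS ℓ u m t := by
  classical
  have hidx : ∀ i ∈ Icc m ℓ, i ∈ Icc 1 ℓ ∧ m + ℓ - i ∈ Icc 1 ℓ := by
    intro i hi
    simp only [mem_Icc] at hi hm ⊢
    omega
  set gain : ℕ → ℝ → ℝ := fun i t => (i : ℝ) * ((m + ℓ - i : ℕ) : ℝ) * u i t * u (m + ℓ - i) t
  set p : ℕ → Prop := fun i => (∀ᶠ t in l, 0 ≤ u i t) ∧ ∀ᶠ t in l, 0 ≤ u (m + ℓ - i) t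
  set S : ℝ → ℝ := fun t => ∑ i ∈ Icc (ℓ - m + 1) ℓ, (i : ℝ) * u i t
  refine ⟨fun t => (Msmall ℓ u t)⁻¹ * ∑ i ∈ (Icc m ℓ).filter (¬ p ·), gain i t
    - u m t * (2 * m * (Msmall ℓ u t)⁻¹ * S t), ?_, ?_⟩
  · have hS : S =O[l] fun _ => (1 : ℝ) := IsBigO.fun_sum fun i hi =>
      (hu i (by simp only [mem_Icc] at hi hm ⊢; omega)).const_mul_left _
    have hgain : (fun t => ∑ i ∈ (Icc m ℓ).filter (¬ p ·), gain i t) =O[l] u m := by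
      refine IsBigO.fun_sum fun i hi => ?_
      obtain ⟨hi, hnp⟩ := mem_filter.1 hi
      obtain ⟨hi₁, hi₂⟩ := hidx i hi
      by_cases hgood : ∀ᶠ t in l, 0 ≤ u i t
      · have hbad := (hsign _ hi₂).resolve_left fun h => hnp ⟨hgood, h⟩
        simpa only [one_mul] using ((hu i hi₁).const_mul_left _).mul hbad
      · have hbad := (hsign i hi₁).resolve_left hgood
        simpa only [mul_one] using (hbad.const_mul_left _).mul (hu _ hi₂)
    have hloss : (fun t => u m t * (2 * m * (Msmall ℓ u t)⁻¹ * S t)) =O[l] u m := by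
      simpa only [mul_one] using (isBigO_refl (u m) l).mul ((hM.const_mul_left _).mul hS)
    have hgain' : (fun t => (Msmall ℓ u t)⁻¹ * ∑ i ∈ (Icc m ℓ).filter (¬ p ·), gain i t)
        =O[l] u m := by
      simpa only [one_mul] using hM.mul hgain
    exact hgain'.sub hloss
  · have hgood : ∀ᶠ t in l, 0 ≤ ∑ i ∈ (Icc m ℓ).filter p, gain i t := by
      have := (eventually_all_finset ((Icc m ℓ).filter p)).2
        fun i hi => (mem_filter.1 hi).2.1.and (mem_filter.1 hi).2.2
      filter_upwards [this] with t ht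
      exact sum_nonneg fun i hi => mul_nonneg (mul_nonneg (by positivity) (ht i hi).1) (ht i hi).2
    filter_upwards [hgood, hM_nonneg] with t hG hMt
    have hsplit := sum_filter_add_sum_filter_not (Icc m ℓ) p (gain · t)
    have := mul_nonneg (inv_nonneg.2 hMt) hG
    rw [smallRHS, ← hsplit]
    simp only [S, div_eq_mul_inv]
    linarith

theorem small_cluster_eventually_nonneg_nhdsGT {ℓ : ℕ} {b : ℝ} {u : ℕ → ℝ → ℝ}
    (hanalytic : ∀ n ∈ Icc 1 ℓ, AnalyticOn ℝ (u n) (Set.Ico 0 b))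
    (hMpos : ∀ t ∈ Set.Ico (0 : ℝ) b, 0 < Msmall ℓ u t)
    (hode : ∀ n ∈ Icc 1 ℓ, ∀ t ∈ Set.Ico (0 : ℝ) b,
      HasDerivWithinAt (u n) (smallRHS ℓ u n t) (Set.Ico 0 b) t)
    {x : ℝ} (hx : x ∈ Set.Ico 0 b) (hux : ∀ n ∈ Icc 1 ℓ, 0 ≤ u n x) :
    ∀ᶠ t in 𝓝[>] x, ∀ n ∈ Icc 1 ℓ, 0 ≤ u n t := by
  have hs : Set.Ico 0 b ∈ 𝓝[>] x :=
    mem_of_superset (Ico_mem_nhdsGT hx.2) (Set.Ico_subset_Ico_left hx.1)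
  have hcont : ∀ n ∈ Icc 1 ℓ, Tendsto (u n) (𝓝[>] x) (𝓝 (u n x)) := fun n hn =>
    (hode n hn x hx).continuousWithinAt.tendsto.mono_left (nhdsWithin_le_of_mem hs)
  by_contra hneg
  obtain ⟨m, hm, hm_neg, hdom⟩ := exists_dominant_eventually_neg
    (fun j hj => (hanalytic j hj x hx).eventually_nonneg_or_eventuallyEq_pow_mul_neg hs) hneg
  have hMinv : (fun t => (Msmall ℓ u t)⁻¹) =O[𝓝[>] x] fun _ => (1 : ℝ) :=
    ((tendsto_Msmall hcont).inv₀ (hMpos x hx).ne').isBigO_one ℝ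
  obtain ⟨E, hE, hE_le⟩ := exists_isBigO_le_smallRHS hm (fun j hj => (hcont j hj).isBigO_one ℝ)
    hMinv (eventually_of_mem hs fun t ht => (hMpos t ht).le) hdom
  obtain ⟨C, hC⟩ := hE.exists_mul_le_of_nonpos (hm_neg.mono fun t ht => ht.le)
  have hderiv : ∀ᶠ t in 𝓝[>] x,
      HasDerivAt (u m) (smallRHS ℓ u m t) t ∧ C * u m t ≤ smallRHS ℓ u m t := by
    filter_upwards [Ioo_mem_nhdsGT hx.2, hC, hE_le] with t ht hCt hEt
    refine ⟨(hode m hm t ⟨hx.1.trans ht.1.le, ht.2⟩).hasDerivAt ?_, hCt.trans hEt⟩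
    exact Ico_mem_nhds (hx.1.trans_lt ht.1) ht.2
  obtain ⟨t, hlt, hge⟩ := (hm_neg.and
    (eventually_nonneg_of_hasDerivAt_ge_mul (hux m hm) (hcont m hm) hderiv)).exists
  exact hlt.not_ge hge

theorem small_cluster_nonneg_general (ℓ : ℕ) (b : ℝ)
    (u : ℕ → ℝ → ℝ)
    (hanalytic : ∀ n ∈ Finset.Icc 1 ℓ, AnalyticOn ℝ (u n) (Set.Ico 0 b))
    (hMpos : ∀ t ∈ Set.Ico (0 : ℝ) b, 0 < Msmall ℓ u t)
    (hode : ∀ n ∈ Finset.Icc 1 ℓ, ∀ t ∈ Set.Ico (0 : ℝ) b,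
      HasDerivWithinAt (u n) (smallRHS ℓ u n t) (Set.Ico 0 b) t)
    (hinit_nonneg : ∀ n ∈ Finset.Icc 1 ℓ, 0 ≤ u n 0) :
    ∀ n ∈ Finset.Icc 1 ℓ, ∀ t ∈ Set.Ico (0 : ℝ) b, 0 ≤ u n t := by
  intro n hn t ht
  have hcont : ∀ j ∈ Icc 1 ℓ, ContinuousOn (u j) (Set.Icc 0 t) := fun j hj =>
    (hanalytic j hj).continuousOn.mono (Set.Icc_subset_Ico_right ht.2)
  have hsub : Set.Icc 0 t ⊆ {s | ∀ j ∈ Icc 1 ℓ, 0 ≤ u j s} :=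
    (isClosed_setOf_forall_nonneg_inter isClosed_Icc hcont).Icc_subset_of_forall_mem_nhdsWithin
      hinit_nonneg fun x hx =>
        small_cluster_eventually_nonneg_nhdsGT hanalytic hMpos hode ⟨hx.2.1, hx.2.2.trans ht.2⟩ hx.1
  exact hsub ⟨ht.1, le_rfl⟩ n hn

/-- let `ℓ ≥ 1` and let `u` be the unique real-analytic solution
of the small-cluster system on `[0, t_ex)` (here: on `[0,b)` with `M > 0`, which
holds exactly for `b ≤ t_ex`) with nonnegative normalized initial data.  Then
`u_n(t) ≥ 0` for every `1 ≤ n ≤ ℓ` and `t ∈ [0, t_ex)`. -/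
theorem small_cluster_nonneg (ℓ : ℕ) (hℓ : 1 ≤ ℓ) (b : ℝ) (hb : 0 < b)
    (u : ℕ → ℝ → ℝ)
    (hanalytic : ∀ n ∈ Finset.Icc 1 ℓ, AnalyticOn ℝ (u n) (Set.Ico 0 b))
    (hMpos : ∀ t ∈ Set.Ico (0 : ℝ) b, 0 < Msmall ℓ u t)
    (hode : ∀ n ∈ Finset.Icc 1 ℓ, ∀ t ∈ Set.Ico (0 : ℝ) b,
      HasDerivWithinAt (u n) (smallRHS ℓ u n t) (Set.Ico 0 b) t)
    (hinit_nonneg : ∀ n ∈ Finset.Icc 1 ℓ, 0 ≤ u n 0)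
    (hinit_sum : ∑ n ∈ Finset.Icc 1 ℓ, u n 0 = 1) :
    ∀ n ∈ Finset.Icc 1 ℓ, ∀ t ∈ Set.Ico (0 : ℝ) b, 0 ≤ u n t :=
  small_cluster_nonneg_general ℓ b u hanalytic hMpos hode hinit_nonneg
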